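/- Let 𝒳 and 𝒴 be finite sets with |𝒴| even and |𝒴| ≥ 2, let G be a two-universal random function from 𝒳 to 𝒴, and let F be a uniform balanced random predicate on 𝒴, independent of G. Then the random predicate H := F ∘ G on 𝒳 is two-universal, i.e., Pr[F(G(x)) = F(G(x'))] ≤ 1/2 for all distinct x, x' ∈ 𝒳. -/

import Mathlib

/-! With `|𝒴| = 2m`, a uniform balanced predicate makes two distinct points collide with
probability exactly `(m - 1) / (2m - 1)`: the count of balanced `f` with `f y = f y'` does not
depend on the pair (it is invariant under permutations of `𝒴`), and for fixed `y` each balanced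
`f` agrees with `f y` at exactly `m - 1` of the other `2m - 1` points. Conditioning on whether
`G x = G x'` gives `Pr[H x = H x'] ≤ q + (1 - q) (m - 1) / (2m - 1)` with `q ≤ 1 / (2m)`, and at
`q = 1 / (2m)` the right-hand side is exactly `1 / 2`. -/

open Finset

/-- The balanced predicates on a finite type `𝒴`: predicates `f : 𝒴 → Bool` with
`|f⁻¹(0)| = |f⁻¹(1)|` (identifying `{0,1}` with `Bool`). -/
def Bal (𝒴 : Type*) [Fintype 𝒴] [DecidableEq 𝒴] : Finset (𝒴 → Bool) :=
  univ.filter (fun f =>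
    (univ.filter (fun y => f y = false)).card = (univ.filter (fun y => f y = true)).card)

/-- The distribution of a uniform balanced random predicate on `𝒴`. -/
noncomputable def PF {𝒴 : Type*} [Fintype 𝒴] [DecidableEq 𝒴] (f : 𝒴 → Bool) : ℝ :=
  if f ∈ Bal 𝒴 then ((Bal 𝒴).card : ℝ)⁻¹ else 0

theorem sum_collision_comp_le {𝒳 𝒴 𝒵 : Type*} [Fintype 𝒳] [DecidableEq 𝒳] [Fintype 𝒴]
    [DecidableEq 𝒴] [Fintype 𝒵] [DecidableEq 𝒵] {μ : (𝒳 → 𝒴) → ℝ} {ν : (𝒴 → 𝒵) → ℝ}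
    (hμ0 : ∀ g, 0 ≤ μ g) (hμ1 : ∑ g, μ g = 1) (hν1 : ∑ f, ν f = 1) {x x' : 𝒳}
    {p q : ℝ} (hp : p ≤ 1)
    (hG : ∑ g ∈ univ.filter (fun g => g x = g x'), μ g ≤ q)
    (hF : ∀ y y' : 𝒴, y ≠ y' → ∑ f ∈ univ.filter (fun f => f y = f y'), ν f ≤ p) :
    ∑ g, ∑ f, (if f (g x) = f (g x') then μ g * ν f else 0) ≤ q + (1 - q) * p := by
  set c := ∑ g ∈ univ.filter (fun g => g x = g x'), μ g
  have hsplit : ∑ g, μ g * (if g x = g x' then 1 else p) = c + (1 - c) * p := by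
    have hcompl : ∑ g ∈ univ.filter (fun g => g x ≠ g x'), μ g = 1 - c := by
      rw [← hμ1, ← sum_filter_add_sum_filter_not univ (fun g => g x = g x')]
      ring
    simp only [mul_ite, mul_one, sum_ite]
    rw [← sum_mul, hcompl]
  calc ∑ g, ∑ f, (if f (g x) = f (g x') then μ g * ν f else 0)
      = ∑ g, μ g * ∑ f ∈ univ.filter (fun f => f (g x) = f (g x')), ν f := by
        simp only [sum_filter, mul_sum, mul_ite, mul_zero]
    _ ≤ ∑ g, μ g * (if g x = g x' then 1 else p) := by
        refine sum_le_sum fun g _ => mul_le_mul_of_nonneg_left ?_ (hμ0 g)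
        split_ifs with h
        · simpa [h] using hν1.le
        · exact hF _ _ h
    _ = p + c * (1 - p) := by rw [hsplit]; ring
    _ ≤ p + q * (1 - p) := by gcongr
    _ = q + (1 - q) * p := by ring

section Balanced

variable {𝒴 : Type*} [Fintype 𝒴] [DecidableEq 𝒴]

theorem two_mul_card_filter_eq_of_mem_Bal {f : 𝒴 → Bool} (hf : f ∈ Bal 𝒴) (b : Bool) :
    2 * #(univ.filter fun y => f y = b) = Fintype.card 𝒴 := by
  have hbal := (mem_filter.1 hf).2
  have htotal := card_filter_add_card_filter_not (s := univ) (fun y => f y = false)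
  simp only [Bool.not_eq_false, card_univ] at htotal
  cases b <;> omega

theorem comp_perm_mem_Bal_iff (σ : Equiv.Perm 𝒴) {f : 𝒴 → Bool} :
    f ∘ σ ∈ Bal 𝒴 ↔ f ∈ Bal 𝒴 := by
  have hcard (b : Bool) : #(univ.filter fun y => f (σ y) = b) = #(univ.filter fun y => f y = b) :=
    card_equiv σ (by simp)
  simp only [Bal, mem_filter, mem_univ, true_and, Function.comp_apply, hcard]

theorem Bal_nonempty (heven : Even (Fintype.card 𝒴)) : (Bal 𝒴).Nonempty := by
  obtain ⟨m, hm⟩ := heven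
  obtain ⟨t, -, ht⟩ := exists_subset_card_eq (s := (univ : Finset 𝒴)) (n := m)
    (by rw [card_univ, hm]; omega)
  refine ⟨fun y => decide (y ∈ t), ?_⟩
  have hcompl : #tᶜ = m := by rw [card_compl, ht, hm]; omega
  simpa [Bal, ← compl_filter, ht] using hcompl

theorem card_Bal_filter_eq_eq_of_ne {y y₁ y₂ : 𝒴} (h₁ : y₁ ≠ y) (h₂ : y₂ ≠ y) :
    #((Bal 𝒴).filter fun f => f y = f y₁) = #((Bal 𝒴).filter fun f => f y = f y₂) := by
  set σ := Equiv.swap y₁ y₂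
  have hσy : σ y = y := Equiv.swap_apply_of_ne_of_ne h₁.symm h₂.symm
  refine card_equiv (Equiv.arrowCongr σ.symm (Equiv.refl Bool)) fun f => ?_
  have happly : Equiv.arrowCongr σ.symm (Equiv.refl Bool) f = f ∘ σ := rfl
  rw [mem_filter, mem_filter, happly, comp_perm_mem_Bal_iff]
  simp [σ, hσy]

theorem card_Bal_filter_eq_eq_mul {m : ℕ} (hm : Fintype.card 𝒴 = 2 * m) {y y' : 𝒴}
    (hne : y' ≠ y) :
    #((Bal 𝒴).filter fun f => f y = f y') * (2 * m - 1) = #(Bal 𝒴) * (m - 1) := by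
  have hrow (f : 𝒴 → Bool) (hf : f ∈ Bal 𝒴) :
      #((univ.erase y).filter fun y' => f y = f y') = m - 1 := by
    have := two_mul_card_filter_eq_of_mem_Bal hf (f y)
    rw [filter_erase, card_erase_of_mem (by simp)]
    simp only [eq_comm (a := f y)]
    omega
  have hcol (y'' : 𝒴) (hy'' : y'' ∈ univ.erase y) :
      #((Bal 𝒴).filter fun f => f y = f y'') = #((Bal 𝒴).filter fun f => f y = f y') :=
    card_Bal_filter_eq_eq_of_ne (ne_of_mem_erase hy'') hne
  have hdouble := sum_comm (s := univ.erase y) (t := Bal 𝒴)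
    (f := fun y' f => if f y = f y' then 1 else 0)
  simp only [← card_filter] at hdouble
  rw [sum_congr rfl hcol, sum_congr rfl hrow, sum_const, sum_const, card_erase_of_mem (mem_univ y),
    card_univ, hm, smul_eq_mul, smul_eq_mul] at hdouble
  rw [mul_comm, hdouble]

theorem sum_PF (heven : Even (Fintype.card 𝒴)) : ∑ f, PF (𝒴 := 𝒴) f = 1 := by
  have hpos : (0 : ℝ) < #(Bal 𝒴) := by exact_mod_cast (Bal_nonempty heven).card_pos
  simp only [PF, sum_ite_mem, univ_inter, sum_const, nsmul_eq_mul]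
  exact mul_inv_cancel₀ hpos.ne'

theorem sum_PF_filter (P : (𝒴 → Bool) → Prop) [DecidablePred P] :
    ∑ f ∈ univ.filter P, PF f = #((Bal 𝒴).filter P) / #(Bal 𝒴) := by
  have hset : univ.filter (fun f => P f ∧ f ∈ Bal 𝒴) = (Bal 𝒴).filter P := by
    ext f
    simp [and_comm]
  rw [sum_filter]
  simp only [PF, ← ite_and, sum_ite, sum_const_zero, add_zero, sum_const, nsmul_eq_mul, hset,
    div_eq_mul_inv]

theorem sum_PF_filter_eq_eq {m : ℕ} (hm : Fintype.card 𝒴 = 2 * m) {y y' : 𝒴} (hne : y ≠ y') :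
    ∑ f ∈ univ.filter (fun f => f y = f y'), PF f = ((m : ℝ) - 1) / (2 * m - 1) := by
  have hm1 : 1 ≤ m := by
    have := Fintype.one_lt_card_iff_nontrivial.2 ⟨y, y', hne⟩
    omega
  have hpos : (0 : ℝ) < #(Bal 𝒴) := by
    exact_mod_cast (Bal_nonempty ⟨m, by omega⟩).card_pos
  have hcount := card_Bal_filter_eq_eq_mul hm hne.symm
  have h2m : (2 * m - 1 : ℝ) ≠ 0 := by
    have : (1 : ℝ) ≤ m := by exact_mod_cast hm1
    linarith
  rw [sum_PF_filter, div_eq_div_iff hpos.ne' h2m]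
  rw [← Nat.cast_inj (R := ℝ), Nat.cast_mul, Nat.cast_mul, Nat.cast_sub hm1,
    Nat.cast_sub (by omega)] at hcount
  push_cast at hcount
  linear_combination hcount

end Balanced

/-- **Lemma `lem:binuniv`**: let `𝒳, 𝒴` be finite sets with `|𝒴|` even and `|𝒴| ≥ 2`,
let `G` be a two-universal random function from `𝒳` to `𝒴` (distribution `PG`), and let
`F` be a uniform balanced random predicate on `𝒴`, independent of `G`. Then the random
predicate `H := F ∘ G` is two-universal: `Pr[F(G(x)) = F(G(x'))] ≤ 1/2` for all
distinct `x, x' ∈ 𝒳`. -/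
theorem lemma_binuniv {𝒳 𝒴 : Type} [Fintype 𝒳] [DecidableEq 𝒳]
    [Fintype 𝒴] [DecidableEq 𝒴]
    (heven : Even (Fintype.card 𝒴)) (hcard : 2 ≤ Fintype.card 𝒴)
    (PG : (𝒳 → 𝒴) → ℝ) (hPG0 : ∀ g, 0 ≤ PG g) (hPG1 : ∑ g, PG g = 1)
    (hGuniv : ∀ x x' : 𝒳, x ≠ x' →
      ∑ g ∈ univ.filter (fun g => g x = g x'), PG g ≤ 1 / (Fintype.card 𝒴 : ℝ)) :
    ∀ x x' : 𝒳, x ≠ x' →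
      ∑ g, ∑ f, (if f (g x) = f (g x') then PG g * PF f else 0) ≤ 1 / 2 := by
  intro x x' hne
  obtain ⟨m, hm⟩ := even_iff_two_dvd.1 heven
  have hm1 : (1 : ℝ) ≤ m := by exact_mod_cast (by omega : 1 ≤ m)
  have hp : ((m : ℝ) - 1) / (2 * m - 1) ≤ 1 := div_le_one_of_le₀ (by linarith) (by linarith)
  calc ∑ g, ∑ f, (if f (g x) = f (g x') then PG g * PF f else 0)
      ≤ 1 / (Fintype.card 𝒴 : ℝ) + (1 - 1 / (Fintype.card 𝒴 : ℝ)) * ((m - 1) / (2 * m - 1)) :=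
        sum_collision_comp_le hPG0 hPG1 (sum_PF heven) hp (hGuniv x x' hne)
          fun y y' hy => (sum_PF_filter_eq_eq hm hy).le
    _ = 1 / 2 := by
        have hm0 : (m : ℝ) ≠ 0 := by linarith
        have h2m : (2 * m - 1 : ℝ) ≠ 0 := by linarith
        rw [hm]
        push_cast
        field_simp
        ring
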